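/- Let R > 0, let {φ_h}_{h∈ℕ} be a sequence of norms on ℝ^{n+1} converging pointwise to a norm φ, let {Ω_h}_{h∈ℕ} be open subsets of the Euclidean ball B_R with Ω_h ≠ ℝ^{n+1}, and suppose that the functions δ^{φ_h}_{Ω_h} converge uniformly on every compact subset of ℝ^{n+1} to a function f : ℝ^{n+1} → ℝ. Then, setting P = {x : f(x) > 0}, one has f(x) = inf{φ°(x − a) : a ∈ ℝ^{n+1} \ P} for every x ∈ ℝ^{n+1}, i.e. f = δ^φ_P. -/

import Mathlib

open MeasureTheory Filter
open scoped RealInnerProductSpace ENNReal Pointwise Topology NNReal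

noncomputable section

/-- `ℝ^{n+1}` with the Euclidean inner product. -/
abbrev Eu (n : ℕ) := EuclideanSpace ℝ (Fin (n + 1))

/-- `φ` is a norm on `ℝ^{n+1}`: positive away from `0`, absolutely homogeneous,
and subadditive. -/
def IsNorm {n : ℕ} (φ : Eu n → ℝ) : Prop :=
  (∀ v : Eu n, v ≠ 0 → 0 < φ v) ∧
  (∀ (c : ℝ) (v : Eu n), φ (c • v) = |c| * φ v) ∧
  (∀ v w : Eu n, φ (v + w) ≤ φ v + φ w)

/-- `φ` is strictly convex: equality in the triangle inequality forces linear dependence. -/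
def StrictlyConvexNorm {n : ℕ} (φ : Eu n → ℝ) : Prop :=
  ∀ v w : Eu n, φ (v + w) = φ v + φ w → φ v • w = φ w • v

/-- The dual (polar) norm `φ°(u) = sup {⟨u,v⟩ : φ(v) ≤ 1}`. -/
def dualN {n : ℕ} (φ : Eu n → ℝ) (u : Eu n) : ℝ :=
  sSup {r : ℝ | ∃ v : Eu n, φ v ≤ 1 ∧ r = ⟪u, v⟫}

/-- The `φ`-distance `δ_A^φ(x) = inf {φ°(x − a) : a ∈ A}`. -/
def adist {n : ℕ} (φ : Eu n → ℝ) (A : Set (Eu n)) (x : Eu n) : ℝ :=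
  sInf ((fun a => dualN φ (x - a)) '' A)

/-- The `φ`-unit normal bundle `N^φ(A)`. -/
def normalBundle {n : ℕ} (φ : Eu n → ℝ) (A : Set (Eu n)) : Set (Eu n × Eu n) :=
  {p | p.1 ∈ closure A ∧ dualN φ p.2 = 1 ∧ ∃ s : ℝ, 0 < s ∧ adist φ A (p.1 + s • p.2) = s}

/-- The `φ`-reach function `r_A^φ(a,η) = sup {s > 0 : δ_A^φ(a + sη) = s}`, valued in `[0,∞]`. -/
def reach {n : ℕ} (φ : Eu n → ℝ) (A : Set (Eu n)) (a η : Eu n) : ℝ≥0∞ :=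
  sSup {s : ℝ≥0∞ | ∃ t : ℝ, 0 < t ∧ adist φ A (a + t • η) = t ∧ s = ENNReal.ofReal t}

/-- The `φ`-cut locus of `A`. -/
def cutLocus {n : ℕ} (φ : Eu n → ℝ) (A : Set (Eu n)) : Set (Eu n) :=
  {x | ∃ a η : Eu n, (a, η) ∈ normalBundle φ A ∧ reach φ A a η < ⊤ ∧
      x = a + (reach φ A a η).toReal • η}

/-- The domain `Γ^φ(A)` of the `φ`-distance flow. -/
def Gamma {n : ℕ} (φ : Eu n → ℝ) (A : Set (Eu n)) : Set (Eu n × Eu n × ℝ) :=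
  {q | (q.1, q.2.1) ∈ normalBundle φ A ∧ 0 < q.2.2 ∧
      ENNReal.ofReal q.2.2 < reach φ A q.1 q.2.1}

/-!
Pointwise convergence of norms on `ℝ^{n+1}` is uniform on the unit sphere, since the norms are
equi-Lipschitz; hence eventually `|φ_h - φ| ≤ ε φ`, which transfers to the dual norms, and
`φ_h°(u_h) → φ°(u)` whenever `u_h → u`. Passing to the limit in
`δ_h(x) ≤ δ_h(y) + φ_h°(x - y)` gives `f(x) ≤ f(y) + φ°(x - y)`, so `f ≤ δ^φ_P`. Conversely,
near-minimisers `a_h ∈ Ω_hᶜ` of `δ_h(x)` stay bounded, and any limit point `b` of them satisfies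
`f(b) ≤ 0` and `φ°(x - b) ≤ f(x)`, so `δ^φ_P(x) ≤ f(x)`.
-/

namespace IsNorm

variable {n : ℕ} {φ : Eu n → ℝ}

theorem map_zero (hφ : IsNorm φ) : φ 0 = 0 := by
  simpa using hφ.2.1 0 0

theorem nonneg (hφ : IsNorm φ) (v : Eu n) : 0 ≤ φ v := by
  rcases eq_or_ne v 0 with rfl | hv
  · exact hφ.map_zero.ge
  · exact (hφ.1 v hv).le

theorem map_smul_of_nonneg (hφ : IsNorm φ) {c : ℝ} (hc : 0 ≤ c) (v : Eu n) :
    φ (c • v) = c * φ v := by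
  rw [hφ.2.1, abs_of_nonneg hc]

theorem le_sum_single_mul_norm (hφ : IsNorm φ) (v : Eu n) :
    φ v ≤ (∑ i, φ (EuclideanSpace.single i 1)) * ‖v‖ := by
  classical
  calc φ v = φ (∑ i, v i • EuclideanSpace.single i (1 : ℝ)) := by
        simpa [EuclideanSpace.basisFun_apply] using
          congrArg φ ((EuclideanSpace.basisFun (Fin (n + 1)) ℝ).sum_repr v).symm
    _ ≤ ∑ i, φ (v i • EuclideanSpace.single i (1 : ℝ)) :=
        Finset.le_sum_of_subadditive φ hφ.map_zero.le hφ.2.2 _ _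
    _ = ∑ i, |v i| * φ (EuclideanSpace.single i 1) := by simp only [hφ.2.1]
    _ ≤ ∑ i, ‖v‖ * φ (EuclideanSpace.single i 1) := by
        gcongr with i
        · exact hφ.nonneg _
        · exact PiLp.norm_apply_le v i
    _ = (∑ i, φ (EuclideanSpace.single i 1)) * ‖v‖ := by rw [Finset.sum_mul]; simp [mul_comm]

theorem lipschitzWith (hφ : IsNorm φ) {K : ℝ≥0} (hK : ∀ v, φ v ≤ K * ‖v‖) :
    LipschitzWith K φ :=
  LipschitzWith.of_le_add_mul K fun v w => by
    simpa [dist_eq_norm] using (hφ.2.2 w (v - w)).trans (add_le_add_right (hK (v - w)) _)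

theorem continuous (hφ : IsNorm φ) : Continuous φ :=
  (hφ.lipschitzWith (K := (∑ i, φ (EuclideanSpace.single i 1)).toNNReal) fun v =>
    (hφ.le_sum_single_mul_norm v).trans
      (mul_le_mul_of_nonneg_right (Real.le_coe_toNNReal _) (norm_nonneg v))).continuous

theorem exists_pos_mul_norm_le (hφ : IsNorm φ) : ∃ c > 0, ∀ v : Eu n, c * ‖v‖ ≤ φ v := by
  obtain ⟨w, hw, hmin⟩ := (isCompact_sphere (0 : Eu n) 1).exists_isMinOn
    (NormedSpace.sphere_nonempty.2 zero_le_one) hφ.continuous.continuousOn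
  have hw0 : w ≠ 0 := ne_zero_of_mem_unit_sphere ⟨w, hw⟩
  refine ⟨φ w, hφ.1 w hw0, fun v => ?_⟩
  rcases eq_or_ne v 0 with rfl | hv
  · simp [hφ.map_zero]
  have hv' : 0 < ‖v‖ := norm_pos_iff.2 hv
  have hunit : ‖v‖⁻¹ • v ∈ Metric.sphere (0 : Eu n) 1 := by
    simp [norm_smul, hv'.ne']
  have : φ w ≤ ‖v‖⁻¹ * φ v := by
    simpa [hφ.map_smul_of_nonneg (inv_nonneg.2 hv'.le)] using isMinOn_iff.1 hmin _ hunit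
  rwa [le_inv_mul_iff₀ hv', mul_comm] at this

end IsNorm

section DualNorm

variable {n : ℕ} {φ ψ : Eu n → ℝ}

theorem inner_le_norm_div_of_le_one {c : ℝ} (hc : 0 < c) (hlow : ∀ v, c * ‖v‖ ≤ φ v)
    (u : Eu n) {v : Eu n} (hv : φ v ≤ 1) : ⟪u, v⟫ ≤ ‖u‖ / c := by
  have hv' : ‖v‖ ≤ 1 / c := by rw [le_div_iff₀ hc]; linarith [hlow v]
  calc ⟪u, v⟫ ≤ ‖u‖ * ‖v‖ := real_inner_le_norm u v
    _ ≤ ‖u‖ * (1 / c) := by gcongr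
    _ = ‖u‖ / c := by ring

theorem le_dualN (hφ : IsNorm φ) (u : Eu n) {v : Eu n} (hv : φ v ≤ 1) : ⟪u, v⟫ ≤ dualN φ u := by
  obtain ⟨c, hc, hlow⟩ := hφ.exists_pos_mul_norm_le
  refine le_csSup ⟨‖u‖ / c, ?_⟩ ⟨v, hv, rfl⟩
  rintro _ ⟨w, hw, rfl⟩
  exact inner_le_norm_div_of_le_one hc hlow u hw

theorem dualN_le_of_forall (hφ : IsNorm φ) {u : Eu n} {r : ℝ}
    (h : ∀ v, φ v ≤ 1 → ⟪u, v⟫ ≤ r) : dualN φ u ≤ r :=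
  csSup_le ⟨0, 0, by simp [hφ.map_zero], by simp⟩ (by rintro _ ⟨v, hv, rfl⟩; exact h v hv)

theorem dualN_nonneg (hφ : IsNorm φ) (u : Eu n) : 0 ≤ dualN φ u := by
  simpa using le_dualN hφ u (v := 0) (by simp [hφ.map_zero])

theorem dualN_zero (hφ : IsNorm φ) : dualN φ (0 : Eu n) = 0 :=
  (dualN_le_of_forall hφ fun v _ => by simp).antisymm (dualN_nonneg hφ 0)

theorem dualN_add_le (hφ : IsNorm φ) (u w : Eu n) : dualN φ (u + w) ≤ dualN φ u + dualN φ w :=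
  dualN_le_of_forall hφ fun v hv => by
    rw [inner_add_left]
    exact add_le_add (le_dualN hφ u hv) (le_dualN hφ w hv)

theorem inner_le_mul_dualN (hφ : IsNorm φ) (u v : Eu n) : ⟪u, v⟫ ≤ φ v * dualN φ u := by
  rcases eq_or_ne v 0 with rfl | hv
  · simp [hφ.map_zero]
  have hpos := hφ.1 v hv
  have := le_dualN hφ u (v := (φ v)⁻¹ • v) (by
    rw [hφ.map_smul_of_nonneg (inv_nonneg.2 hpos.le), inv_mul_cancel₀ hpos.ne'])
  rwa [real_inner_smul_right, inv_mul_le_iff₀ hpos] at this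

theorem norm_le_mul_dualN (hφ : IsNorm φ) {K : ℝ≥0} (hK : ∀ v, φ v ≤ K * ‖v‖) (u : Eu n) :
    ‖u‖ ≤ K * dualN φ u := by
  rcases eq_or_ne u 0 with rfl | hu
  · simpa using mul_nonneg K.2 (dualN_nonneg hφ 0)
  have hu' : 0 < ‖u‖ := norm_pos_iff.2 hu
  have : ‖u‖ * ‖u‖ ≤ ‖u‖ * (K * dualN φ u) := by
    calc ‖u‖ * ‖u‖ = ⟪u, u⟫ := (real_inner_self_eq_norm_mul_norm u).symm
      _ ≤ φ u * dualN φ u := inner_le_mul_dualN hφ u u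
      _ ≤ K * ‖u‖ * dualN φ u := by gcongr; exacts [dualN_nonneg hφ u, hK u]
      _ = ‖u‖ * (K * dualN φ u) := by ring
  exact le_of_mul_le_mul_left this hu'

theorem dualN_le_mul_of_le_mul (hφ : IsNorm φ) (hψ : IsNorm ψ) {t : ℝ} (ht : 0 ≤ t)
    (h : ∀ v, φ v ≤ t * ψ v) (u : Eu n) : dualN ψ u ≤ t * dualN φ u :=
  dualN_le_of_forall hψ fun v hv => calc
    ⟪u, v⟫ ≤ φ v * dualN φ u := inner_le_mul_dualN hφ u v
    _ ≤ t * ψ v * dualN φ u := by gcongr; exacts [dualN_nonneg hφ u, h v]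
    _ ≤ t * dualN φ u := by
        have := mul_nonneg ht (dualN_nonneg hφ u)
        nlinarith

theorem abs_dualN_sub_le_of_abs_sub_le (hφ : IsNorm φ) (hψ : IsNorm ψ) {ε : ℝ} (hε : 0 ≤ ε)
    (hε' : ε ≤ 1 / 2) (h : ∀ v, |ψ v - φ v| ≤ ε * φ v) (u : Eu n) :
    |dualN ψ u - dualN φ u| ≤ 2 * ε * dualN φ u := by
  have hlower : (1 - ε) * dualN ψ u ≤ dualN φ u := by
    have := dualN_le_mul_of_le_mul hφ hψ (inv_nonneg.2 (by linarith : 0 ≤ 1 - ε)) (fun v => by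
      rw [inv_mul_eq_div, le_div_iff₀ (by linarith)]
      linarith [(abs_le.1 (h v)).1]) u
    rwa [← div_eq_inv_mul, le_div_iff₀ (by linarith), mul_comm] at this
  have hupper : dualN φ u ≤ (1 + ε) * dualN ψ u :=
    dualN_le_mul_of_le_mul hψ hφ (by linarith) (fun v => by linarith [(abs_le.1 (h v)).2]) u
  have := dualN_nonneg hψ u
  rw [abs_le]
  constructor <;> nlinarith

theorem continuous_dualN (hφ : IsNorm φ) : Continuous (dualN φ) := by
  obtain ⟨c, hc, hlow⟩ := hφ.exists_pos_mul_norm_le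
  refine (LipschitzWith.of_le_add_mul (1 / c).toNNReal fun u w => ?_).continuous
  have hdiff : dualN φ (u - w) ≤ ‖u - w‖ / c :=
    dualN_le_of_forall hφ fun v hv => inner_le_norm_div_of_le_one hc hlow _ hv
  calc dualN φ u ≤ dualN φ w + dualN φ (u - w) := by simpa using dualN_add_le hφ w (u - w)
    _ ≤ dualN φ w + (1 / c).toNNReal * dist u w := by
        rw [Real.coe_toNNReal _ (by positivity), dist_eq_norm, one_div_mul_eq_div]
        linarith

end DualNorm

section Distance

variable {n : ℕ} {φ : Eu n → ℝ} {A : Set (Eu n)}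

theorem adist_le (hφ : IsNorm φ) {a : Eu n} (ha : a ∈ A) (x : Eu n) :
    adist φ A x ≤ dualN φ (x - a) :=
  csInf_le ⟨0, by rintro _ ⟨b, -, rfl⟩; exact dualN_nonneg hφ _⟩ ⟨a, ha, rfl⟩

theorem le_adist (hA : A.Nonempty) {x : Eu n} {r : ℝ} (h : ∀ a ∈ A, r ≤ dualN φ (x - a)) :
    r ≤ adist φ A x :=
  le_csInf (hA.image _) (by rintro _ ⟨a, ha, rfl⟩; exact h a ha)

theorem adist_le_adist_add (hφ : IsNorm φ) (hA : A.Nonempty) (x y : Eu n) :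
    adist φ A x ≤ adist φ A y + dualN φ (x - y) := by
  rw [← sub_le_iff_le_add]
  refine le_adist hA fun a ha => ?_
  have := dualN_add_le hφ (y - a) (x - y)
  rw [sub_add_sub_cancel'] at this
  linarith [adist_le hφ ha x]

theorem exists_dualN_sub_lt_adist_add (hA : A.Nonempty) (x : Eu n) {ε : ℝ} (hε : 0 < ε) :
    ∃ a ∈ A, dualN φ (x - a) < adist φ A x + ε := by
  obtain ⟨_, ⟨a, ha, rfl⟩, hlt⟩ := exists_lt_of_csInf_lt (hA.image _) (lt_add_of_pos_right _ hε)
  exact ⟨a, ha, hlt⟩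

end Distance

theorem tendstoUniformlyOn_of_lipschitzWith {X ι : Type*} [PseudoMetricSpace X] {l : Filter ι}
    {F : ι → X → ℝ} {f : X → ℝ} {K : ℝ≥0} (hF : ∀ i, LipschitzWith K (F i))
    (hf : ∀ x, Tendsto (fun i => F i x) l (𝓝 (f x))) {s : Set X} (hs : IsCompact s) :
    TendstoUniformlyOn F f l s := by
  have : CompactSpace s := isCompact_iff_compactSpace.1 hs
  have heq : Equicontinuous fun i => s.domRestrict (F i) :=
    (LipschitzWith.uniformEquicontinuous _ K fun i => (hF i).restrict s).equicontinuous
  rw [tendstoUniformlyOn_iff_tendstoUniformly_comp_coe]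
  exact UniformFun.tendsto_iff_tendstoUniformly.1
    ((heq.tendsto_uniformFun_iff_pi _ _).2 (tendsto_pi_nhds.2 fun x => hf x))

section Convergence

variable {n : ℕ} {φh : ℕ → Eu n → ℝ} {φ : Eu n → ℝ}

theorem exists_forall_le_mul_norm_of_tendsto (hh : ∀ h, IsNorm (φh h))
    (hconv : ∀ v, Tendsto (fun h => φh h v) atTop (𝓝 (φ v))) :
    ∃ K : ℝ≥0, ∀ h v, φh h v ≤ K * ‖v‖ := by
  have hsum : Tendsto (fun h => ∑ i, φh h (EuclideanSpace.single i 1)) atTop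
      (𝓝 (∑ i, φ (EuclideanSpace.single i 1))) :=
    tendsto_finsetSum _ fun i _ => hconv _
  obtain ⟨M, hM⟩ := hsum.bddAbove_range
  refine ⟨M.toNNReal, fun h v => ((hh h).le_sum_single_mul_norm v).trans ?_⟩
  gcongr
  exact (hM ⟨h, rfl⟩).trans (Real.le_coe_toNNReal M)

theorem tendstoUniformlyOn_of_tendsto (hh : ∀ h, IsNorm (φh h))
    (hconv : ∀ v, Tendsto (fun h => φh h v) atTop (𝓝 (φ v))) {s : Set (Eu n)}
    (hs : IsCompact s) : TendstoUniformlyOn φh φ atTop s := by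
  obtain ⟨K, hK⟩ := exists_forall_le_mul_norm_of_tendsto hh hconv
  exact tendstoUniformlyOn_of_lipschitzWith (fun h => (hh h).lipschitzWith (hK h)) hconv hs

theorem eventually_abs_sub_le_mul (hh : ∀ h, IsNorm (φh h)) (hφ : IsNorm φ)
    (hconv : ∀ v, Tendsto (fun h => φh h v) atTop (𝓝 (φ v))) {ε : ℝ} (hε : 0 < ε) :
    ∀ᶠ h in atTop, ∀ v, |φh h v - φ v| ≤ ε * φ v := by
  obtain ⟨c, hc, hlow⟩ := hφ.exists_pos_mul_norm_le
  filter_upwards [Metric.tendstoUniformlyOn_iff.1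
    (tendstoUniformlyOn_of_tendsto hh hconv (isCompact_sphere 0 1)) (ε * c) (by positivity)]
    with h hclose v
  rcases eq_or_ne v 0 with rfl | hv
  · simp [hφ.map_zero, (hh h).map_zero]
  have hv' : 0 < ‖v‖ := norm_pos_iff.2 hv
  have hunit : ‖v‖⁻¹ • v ∈ Metric.sphere (0 : Eu n) 1 := by simp [norm_smul, hv'.ne']
  have hscale : ∀ ψ : Eu n → ℝ, IsNorm ψ → ψ v = ‖v‖ * ψ (‖v‖⁻¹ • v) := fun ψ hψ => by
    rw [hψ.map_smul_of_nonneg (inv_nonneg.2 hv'.le), mul_inv_cancel_left₀ hv'.ne']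
  have hunit_close := hclose _ hunit
  rw [Real.dist_eq, abs_sub_comm] at hunit_close
  calc |φh h v - φ v| = ‖v‖ * |φh h (‖v‖⁻¹ • v) - φ (‖v‖⁻¹ • v)| := by
        rw [hscale _ (hh h), hscale _ hφ, ← mul_sub, abs_mul, abs_of_pos hv']
    _ ≤ ‖v‖ * (ε * c) := by gcongr
    _ = ε * (c * ‖v‖) := by ring
    _ ≤ ε * φ v := by gcongr; exact hlow v

theorem eventually_abs_dualN_sub_le (hh : ∀ h, IsNorm (φh h)) (hφ : IsNorm φ)
    (hconv : ∀ v, Tendsto (fun h => φh h v) atTop (𝓝 (φ v))) {ε : ℝ} (hε : 0 < ε) :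
    ∀ᶠ h in atTop, ∀ u, |dualN (φh h) u - dualN φ u| ≤ ε * dualN φ u := by
  filter_upwards [eventually_abs_sub_le_mul hh hφ hconv (lt_min (half_pos hε) one_half_pos)]
    with h hclose u
  calc |dualN (φh h) u - dualN φ u| ≤ 2 * min (ε / 2) (1 / 2) * dualN φ u :=
        abs_dualN_sub_le_of_abs_sub_le hφ (hh h) (by positivity) (min_le_right _ _) hclose u
    _ ≤ ε * dualN φ u := by
        gcongr
        · exact dualN_nonneg hφ u
        · linarith [min_le_left (ε / 2) (1 / 2)]

theorem tendsto_dualN (hh : ∀ h, IsNorm (φh h)) (hφ : IsNorm φ)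
    (hconv : ∀ v, Tendsto (fun h => φh h v) atTop (𝓝 (φ v))) {u : ℕ → Eu n} {u₀ : Eu n}
    (hu : Tendsto u atTop (𝓝 u₀)) :
    Tendsto (fun h => dualN (φh h) (u h)) atTop (𝓝 (dualN φ u₀)) := by
  have hlim : Tendsto (fun h => dualN φ (u h)) atTop (𝓝 (dualN φ u₀)) :=
    ((continuous_dualN hφ).tendsto u₀).comp hu
  have hsmall : (fun h => dualN (φh h) (u h) - dualN φ (u h)) =o[atTop] fun h => dualN φ (u h) :=
    Asymptotics.IsLittleO.of_bound fun ε hε =>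
      (eventually_abs_dualN_sub_le hh hφ hconv hε).mono fun h hclose => by
        simpa only [Real.norm_eq_abs, abs_of_nonneg (dualN_nonneg hφ _)] using hclose (u h)
  simpa using
    ((Asymptotics.isLittleO_one_iff ℝ).1 (hsmall.trans_isBigO (hlim.isBigO_one ℝ))).add hlim

end Convergence

section Limit

variable {n : ℕ} {φh : ℕ → Eu n → ℝ} {φ : Eu n → ℝ} {A : ℕ → Set (Eu n)} {f : Eu n → ℝ}

theorem le_add_dualN_of_tendsto_adist (hh : ∀ h, IsNorm (φh h)) (hφ : IsNorm φ)
    (hconv : ∀ v, Tendsto (fun h => φh h v) atTop (𝓝 (φ v))) (hA : ∀ h, (A h).Nonempty)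
    (hlim : ∀ x, Tendsto (fun h => adist (φh h) (A h) x) atTop (𝓝 (f x))) (x y : Eu n) :
    f x ≤ f y + dualN φ (x - y) :=
  le_of_tendsto_of_tendsto' (hlim x)
    ((hlim y).add (tendsto_dualN hh hφ hconv tendsto_const_nhds))
    fun h => adist_le_adist_add (hh h) (hA h) x y

theorem exists_nonpos_dualN_sub_le_of_tendsto_adist (hh : ∀ h, IsNorm (φh h)) (hφ : IsNorm φ)
    (hconv : ∀ v, Tendsto (fun h => φh h v) atTop (𝓝 (φ v))) (hA : ∀ h, (A h).Nonempty)
    (hlim : ∀ x, Tendsto (fun h => adist (φh h) (A h) x) atTop (𝓝 (f x))) (x : Eu n) :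
    ∃ b, f b ≤ 0 ∧ dualN φ (x - b) ≤ f x := by
  choose a ha hnear using fun h : ℕ =>
    exists_dualN_sub_lt_adist_add (hA h) x (Nat.one_div_pos_of_nat (α := ℝ) (n := h))
  obtain ⟨K, hK⟩ := exists_forall_le_mul_norm_of_tendsto hh hconv
  obtain ⟨M, hM⟩ := (hlim x).bddAbove_range
  have hbdd : ∀ h, a h ∈ Metric.closedBall x (K * (M + 1)) := fun h => by
    rw [Metric.mem_closedBall, dist_comm, dist_eq_norm]
    calc ‖x - a h‖ ≤ K * dualN (φh h) (x - a h) := norm_le_mul_dualN (hh h) (hK h) _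
      _ ≤ K * (M + 1) := by
        have hsmall : 1 / ((h : ℝ) + 1) ≤ 1 := by rw [div_le_one (by positivity)]; simp
        gcongr
        exact (hnear h).le.trans (add_le_add (hM ⟨h, rfl⟩) hsmall)
  obtain ⟨b, -, σ, hσ, hab⟩ := tendsto_subseq_of_bounded Metric.isBounded_closedBall hbdd
  have hσ := hσ.tendsto_atTop
  have hdual : ∀ y, Tendsto (fun k => dualN (φh (σ k)) (y - a (σ k))) atTop (𝓝 (dualN φ (y - b))) :=
    fun y => tendsto_dualN (fun k => hh (σ k)) hφ (fun v => (hconv v).comp hσ)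
      (tendsto_const_nhds.sub hab)
  refine ⟨b, ?_, ?_⟩
  · refine le_of_tendsto_of_tendsto' ((hlim b).comp hσ) ?_ fun k => adist_le (hh _) (ha _) b
    simpa [dualN_zero hφ] using hdual b
  · refine le_of_tendsto_of_tendsto' (hdual x) ?_ fun k => (hnear (σ k)).le
    simpa [Function.comp_def] using ((hlim x).add tendsto_one_div_add_atTop_nhds_zero_nat).comp hσ

end Limit

theorem limit_distance_function_general {n : ℕ}
    (φh : ℕ → Eu n → ℝ) (φ : Eu n → ℝ)
    (hh : ∀ h, IsNorm (φh h)) (hφ : IsNorm φ)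
    (hconv : ∀ v : Eu n, Tendsto (fun h => φh h v) atTop (nhds (φ v)))
    (Ωh : ℕ → Set (Eu n))
    (hneuniv : ∀ h, Ωh h ≠ Set.univ)
    (f : Eu n → ℝ)
    (hunif : ∀ K : Set (Eu n), IsCompact K →
      TendstoUniformlyOn (fun h x => adist (φh h) (Ωh h)ᶜ x) f atTop K) :
    ∀ x : Eu n, f x = adist φ {y : Eu n | 0 < f y}ᶜ x := by
  have hA : ∀ h, (Ωh h)ᶜ.Nonempty := fun h => Set.nonempty_compl.2 (hneuniv h)
  have hlim : ∀ x, Tendsto (fun h => adist (φh h) (Ωh h)ᶜ x) atTop (𝓝 (f x)) := fun x =>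
    (hunif {x} isCompact_singleton).tendsto_at (Set.mem_singleton x)
  intro x
  obtain ⟨a, hfa, hxa⟩ := exists_nonpos_dualN_sub_le_of_tendsto_adist hh hφ hconv hA hlim x
  have ha : a ∈ {y : Eu n | 0 < f y}ᶜ := not_lt.2 hfa
  refine le_antisymm (le_adist ⟨a, ha⟩ fun b hb => ?_) ((adist_le hφ ha x).trans hxa)
  have hfb : f b ≤ 0 := not_lt.1 hb
  linarith [le_add_dualN_of_tendsto_adist hh hφ hconv hA hlim x b]

/-- if the distance functions `δ^{φ_h}_{Ω_h}` converge locally uniformly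
to `f`, then `f` is the `φ`-distance to the complement of `P = {f > 0}`. -/
theorem limit_distance_function {n : ℕ} (R : ℝ) (hR : 0 < R)
    (φh : ℕ → Eu n → ℝ) (φ : Eu n → ℝ)
    (hh : ∀ h, IsNorm (φh h)) (hφ : IsNorm φ)
    (hconv : ∀ v : Eu n, Tendsto (fun h => φh h v) atTop (nhds (φ v)))
    (Ωh : ℕ → Set (Eu n)) (hopen : ∀ h, IsOpen (Ωh h))
    (hball : ∀ h, Ωh h ⊆ Metric.ball (0 : Eu n) R)
    (hneuniv : ∀ h, Ωh h ≠ Set.univ)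
    (f : Eu n → ℝ)
    (hunif : ∀ K : Set (Eu n), IsCompact K →
      TendstoUniformlyOn (fun h x => adist (φh h) (Ωh h)ᶜ x) f atTop K) :
    ∀ x : Eu n, f x = adist φ {y : Eu n | 0 < f y}ᶜ x :=
  limit_distance_function_general φh φ hh hφ hconv Ωh hneuniv f hunif
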